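/- arXiv:1309.7409 — 5 statements merged into one kernel-verified Lean document; each statement's English description precedes it below -/
import Mathlib

section
/- Let X be a set and c : X × X × X → ℕ a reduced cocycle, i.e. c satisfies the cocycle condition c(X,Y,Z) - c(W,Y,Z) + c(W,X,Z) - c(W,X,Y) = 0 for all W,X,Y,Z and c(X,X,Y) = 0 = c(X,Y,Y) for all X,Y. Then the relation X ∼ Y defined by c(X,Y,X) = 0 is an equivalence relation on X. -/
/-!
The function `d x y := c x y x` behaves like a pseudometric with values in `ℕ`: it vanishes on
the diagonal, is symmetric, and satisfies the triangle inequality, each being an instance of the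
cocycle identity combined with the reducedness conditions. The zero set of such a function is an
equivalence relation.
-/

section ReducedCocycle

variable {X : Type*} {c : X → X → X → ℕ}

lemma cocycle_add_eq_add
    (hcoc : ∀ w x y z : X, (c x y z : ℤ) - (c w y z : ℤ) + (c w x z : ℤ) - (c w x y : ℤ) = 0)
    (w x y z : X) : c x y z + c w x z = c w y z + c w x y := by
  have := hcoc w x y z
  omega

lemma cocycle_apex_comm
    (hcoc : ∀ w x y z : X, (c x y z : ℤ) - (c w y z : ℤ) + (c w x z : ℤ) - (c w x y : ℤ) = 0)
    (hred : ∀ x y : X, c x x y = 0 ∧ c x y y = 0) (x y : X) : c y x y = c x y x := by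
  have := cocycle_add_eq_add hcoc x y x y
  have := hred x y
  omega

lemma cocycle_apex_triangle
    (hcoc : ∀ w x y z : X, (c x y z : ℤ) - (c w y z : ℤ) + (c w x z : ℤ) - (c w x y : ℤ) = 0)
    (hred : ∀ x y : X, c x x y = 0 ∧ c x y y = 0) (x y z : X) :
    c x z x ≤ c x y x + c y z y := by
  have h₁ := cocycle_add_eq_add hcoc x z y x
  have h₂ := cocycle_add_eq_add hcoc x y z y
  have := (hred x y).2
  omega

end ReducedCocycle

/-- A reduced cocycle `c : X³ → ℕ` gives an equivalence relation `x ∼ y ↔ c(x,y,x) = 0`. -/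
theorem stmt0 {X : Type*} (c : X → X → X → ℕ)
    (hcoc : ∀ w x y z : X,
      (c x y z : ℤ) - (c w y z : ℤ) + (c w x z : ℤ) - (c w x y : ℤ) = 0)
    (hred : ∀ x y : X, c x x y = 0 ∧ c x y y = 0) :
    Equivalence (fun x y : X => c x y x = 0) := by
  refine ⟨fun x => (hred x x).1, fun {x y} hxy => ?_, fun {x y z} hxy hyz => ?_⟩
  · rwa [cocycle_apex_comm hcoc hred x y]
  · have := cocycle_apex_triangle hcoc hred x y z
    omega
end

section
/- Define two open arcs (intervals) I = (x,y) and J = (z,w) in the circle S¹_π = ℝ/πℤ (each of length < π) to be noncrossing if they are disjoint or one contains the other. Then the circle S¹_π cannot be covered by a (possibly infinite) collection of open arcs, each of length < π, which are pairwise noncrossing. -/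
/-- The open arc in the circle `S¹_π = ℝ/πℤ` which is the image of the interval `(x,y)`. -/
def Arc (x y : ℝ) : Set (AddCircle Real.pi) :=
  (fun t : ℝ => (QuotientAddGroup.mk t : AddCircle Real.pi)) '' Set.Ioo x y

/-!
A maximal member `s` of a noncrossing open cover is also closed: a point outside `s` lies in some
member of the cover, which cannot contain `s` by maximality, hence is disjoint from `s`. On a
compact space one may pass to a finite subcover, where maximal members exist; on a connected space
a nonempty clopen set is everything. An arc of length `< π` misses its own left endpoint.
-/

open Set

section Noncrossing

variable {X : Type*} [TopologicalSpace X]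

theorem isClosed_of_maximal_of_noncrossing {𝒮 : Set (Set X)} {s : Set X}
    (hopen : ∀ t ∈ 𝒮, IsOpen t) (hcover : ⋃₀ 𝒮 = univ)
    (hnc : ∀ t ∈ 𝒮, ∀ u ∈ 𝒮, Disjoint t u ∨ t ⊆ u ∨ u ⊆ t)
    (hmax : Maximal (· ∈ 𝒮) s) : IsClosed s := by
  refine isOpen_compl_iff.1 <| isOpen_iff_forall_mem_open.2 fun p hp => ?_
  obtain ⟨t, ht𝒮, hpt⟩ := mem_sUnion.1 (hcover ▸ mem_univ p)
  refine ⟨t, fun q hqt hqs => ?_, hopen t ht𝒮, hpt⟩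
  rcases hnc t ht𝒮 s hmax.prop with hdisj | hts | hst
  · exact hdisj.notMem_of_mem_left hqt hqs
  · exact hp (hts hpt)
  · exact hp (hmax.2 ht𝒮 hst hpt)

theorem iUnion_ne_univ_of_noncrossing [CompactSpace X] [ConnectedSpace X]
    {ι : Type*} (U : ι → Set X) (hopen : ∀ i, IsOpen (U i)) (hne : ∀ i, U i ≠ univ)
    (hnc : ∀ i j, Disjoint (U i) (U j) ∨ U i ⊆ U j ∨ U j ⊆ U i) :
    ⋃ i, U i ≠ univ := by
  intro hcover
  obtain ⟨t, ht⟩ := isCompact_univ.elim_finite_subcover U hopen hcover.ge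
  have hcover_t : ⋃₀ (U '' t) = univ := by
    rw [sUnion_image]; exact univ_subset_iff.1 ht
  obtain ⟨x⟩ := ‹ConnectedSpace X›.toNonempty
  obtain ⟨j, hjt, hxj⟩ := mem_iUnion₂.1 (ht (mem_univ x))
  obtain ⟨s, hjs, hmax⟩ :=
    (t.finite_toSet.image U).exists_le_maximal (mem_image_of_mem U (Finset.mem_coe.2 hjt))
  obtain ⟨i, -, rfl⟩ := hmax.prop
  have hclosed : IsClosed (U i) := by
    refine isClosed_of_maximal_of_noncrossing ?_ hcover_t ?_ hmax
    · rintro _ ⟨k, -, rfl⟩; exact hopen k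
    · rintro _ ⟨k, -, rfl⟩ _ ⟨l, -, rfl⟩; exact hnc k l
  rcases isClopen_iff.1 ⟨hclosed, hopen i⟩ with hempty | huniv
  · exact (hempty ▸ hjs hxj : x ∈ (∅ : Set X))
  · exact hne i huniv

end Noncrossing

theorem isOpen_arc (x y : ℝ) : IsOpen (Arc x y) :=
  QuotientAddGroup.isOpenMap_coe _ isOpen_Ioo

theorem coe_notMem_arc {x y : ℝ} (h : y < x + Real.pi) :
    (x : AddCircle Real.pi) ∉ Arc x y := by
  have : Fact (0 < Real.pi) := ⟨Real.pi_pos⟩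
  rintro ⟨t, ⟨hxt, hty⟩, htx⟩
  have hx : x ∈ Ico x (x + Real.pi) := ⟨le_rfl, by linarith [Real.pi_pos]⟩
  have ht : t ∈ Ico x (x + Real.pi) := ⟨hxt.le, hty.trans h⟩
  exact hxt.ne' ((AddCircle.coe_eq_coe_iff_of_mem_Ico ht hx).1 htx)

theorem arc_ne_univ {x y : ℝ} (h : y < x + Real.pi) : Arc x y ≠ univ :=
  fun hu => coe_notMem_arc h (hu ▸ mem_univ _)

/-- The circle `S¹_π` cannot be covered by a family of open arcs, each of length `< π`,
which are pairwise noncrossing (i.e. pairwise disjoint or nested). -/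
theorem stmt8 (ι : Type*) (a b : ι → ℝ)
    (hab : ∀ i, a i < b i ∧ b i < a i + Real.pi)
    (hnc : ∀ i j,
      Disjoint (Arc (a i) (b i)) (Arc (a j) (b j)) ∨
      Arc (a i) (b i) ⊆ Arc (a j) (b j) ∨
      Arc (a j) (b j) ⊆ Arc (a i) (b i)) :
    (⋃ i, Arc (a i) (b i)) ≠ Set.univ := by
  have : Fact (0 < Real.pi) := ⟨Real.pi_pos⟩
  exact iUnion_ne_univ_of_noncrossing _ (fun i => isOpen_arc _ _)
    (fun i => arc_ne_univ (hab i).2) hnc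
end

section
/- Let I = (x,y) ⊂ ℝ with x < y. The set L₀ = { ((x + (k-1)(y-x)/2ⁿ, x + k(y-x)/2ⁿ)) : n ≥ 0, 1 ≤ k ≤ 2ⁿ } of dyadic subintervals of I is a pairwise noncrossing family of open subintervals of I (any two members are disjoint or one contains the other), and it is maximal: any open interval (a,b) ⊆ (x,y) which is noncrossing with every member of L₀ already belongs to L₀. -/
/-!
Dyadic intervals of a common level `N` are the pieces between consecutive points of the
grid `x + k (y - x) / 2 ^ N`, and a level-`n` grid point is a level-`N` grid point for
`n ≤ N`; two such pieces are therefore disjoint or nested.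

For maximality, take a dyadic point in `(a, b)` of minimal level `N + 1` (one exists by
density; level `0` only has the points `x` and `y`). Its index is odd, since otherwise it
would have level `N`. Noncrossing with the two level-`N + 1` intervals adjacent to it forces
both to lie in `(a, b)`; their outer endpoints have level `N`, hence are not inside
`(a, b)`, so they are `a` and `b`.
-/

open Set

def Noncrossing {α : Type*} (S T : Set α) : Prop :=
  Disjoint S T ∨ S ⊆ T ∨ T ⊆ S

theorem Noncrossing.symm {α : Type*} {S T : Set α} (h : Noncrossing S T) : Noncrossing T S := by
  rcases h with h | h | h
  exacts [Or.inl h.symm, Or.inr (Or.inr h), Or.inr (Or.inl h)]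

section LinearOrder

variable {α : Type*} [LinearOrder α]

theorem noncrossing_Ioo_of_strictMono {f : ℤ → α} (hf : StrictMono f) (p q j : ℤ) :
    Noncrossing (Ioo (f p) (f q)) (Ioo (f j) (f (j + 1))) := by
  rcases lt_or_ge j p with hjp | hpj
  · exact Or.inl ((Ioc_disjoint_Ioc_of_le (hf.monotone (by omega))).mono
      Ioo_subset_Ioc_self Ioo_subset_Ioc_self).symm
  rcases lt_or_ge j q with hjq | hqj
  · exact Or.inr (Or.inr (Ioo_subset_Ioo (hf.monotone hpj) (hf.monotone (by omega))))
  · exact Or.inl ((Ioc_disjoint_Ioc_of_le (hf.monotone hqj)).mono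
      Ioo_subset_Ioc_self Ioo_subset_Ioc_self)

variable [DenselyOrdered α] {a b c d : α}

theorem Noncrossing.le_of_right_mem_Ioo (h : Noncrossing (Ioo a b) (Ioo c d)) (hcd : c < d)
    (hd : d ∈ Ioo a b) : a ≤ c := by
  rcases h with h | h | h
  · rw [Ioo_disjoint_Ioo, min_eq_right hd.2.le] at h
    exact absurd h (not_le.2 (max_lt hd.1 hcd))
  · exact absurd ((Ioo_subset_Ioo_iff (hd.1.trans hd.2)).1 h).2 (not_le.2 hd.2)
  · exact ((Ioo_subset_Ioo_iff hcd).1 h).1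

theorem Noncrossing.le_of_left_mem_Ioo (h : Noncrossing (Ioo a b) (Ioo c d)) (hcd : c < d)
    (hc : c ∈ Ioo a b) : d ≤ b := by
  rcases h with h | h | h
  · rw [Ioo_disjoint_Ioo, max_eq_right hc.1.le] at h
    exact absurd h (not_le.2 (lt_min hc.2 hcd))
  · exact absurd ((Ioo_subset_Ioo_iff (hc.1.trans hc.2)).1 h).1 (not_le.2 hc.1)
  · exact ((Ioo_subset_Ioo_iff hcd).1 h).2

end LinearOrder

noncomputable def dyadicPoint (x y : ℝ) (n : ℕ) (k : ℤ) : ℝ := x + k * (y - x) / 2 ^ n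

/-- `dyadicInterval x y n k` is the `(k + 1)`-st of the `2 ^ n` pieces of `(x, y)`. -/
noncomputable def dyadicInterval (x y : ℝ) (n : ℕ) (k : ℤ) : Set ℝ :=
  Ioo (dyadicPoint x y n k) (dyadicPoint x y n (k + 1))

def dyadicIntervals (x y : ℝ) : Set (Set ℝ) :=
  {S | ∃ n k : ℕ, 1 ≤ k ∧ k ≤ 2 ^ n ∧
    S = Ioo (x + ((k : ℝ) - 1) * (y - x) / 2 ^ n) (x + (k : ℝ) * (y - x) / 2 ^ n)}

section Dyadic

variable {x y : ℝ}

@[simp]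
theorem dyadicPoint_zero (x y : ℝ) (n : ℕ) : dyadicPoint x y n 0 = x := by
  simp [dyadicPoint]

@[simp]
theorem dyadicPoint_two_pow (x y : ℝ) (n : ℕ) : dyadicPoint x y n (2 ^ n) = y := by
  simp [dyadicPoint]

theorem dyadicPoint_add_mul_two_pow (x y : ℝ) (n t : ℕ) (k : ℤ) :
    dyadicPoint x y (n + t) (k * 2 ^ t) = dyadicPoint x y n k := by
  simp only [dyadicPoint, pow_add]
  push_cast
  field_simp

theorem dyadicPoint_succ_two_mul (x y : ℝ) (n : ℕ) (k : ℤ) :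
    dyadicPoint x y (n + 1) (2 * k) = dyadicPoint x y n k := by
  simpa [mul_comm] using dyadicPoint_add_mul_two_pow x y n 1 k

theorem dyadicPoint_strictMono (hxy : x < y) (n : ℕ) : StrictMono (dyadicPoint x y n) := by
  intro k j hkj
  have : (0 : ℝ) < (y - x) / 2 ^ n := by have := sub_pos.2 hxy; positivity
  simp only [dyadicPoint, mul_div_assoc, add_lt_add_iff_left]
  exact mul_lt_mul_of_pos_right (by exact_mod_cast hkj) this

theorem exists_dyadicPoint_mem_Ioo (hxy : x < y) {a b : ℝ} (hab : a < b) :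
    ∃ n k, dyadicPoint x y n k ∈ Ioo a b := by
  obtain ⟨n, hn⟩ := exists_pow_lt_of_lt_one (div_pos (sub_pos.2 hab) (sub_pos.2 hxy))
    (by norm_num : (1 / 2 : ℝ) < 1)
  have hstep : 0 < (y - x) / 2 ^ n := by have := sub_pos.2 hxy; positivity
  have hsmall : (y - x) / 2 ^ n < b - a := by
    rw [one_div_pow, lt_div_iff₀ (sub_pos.2 hxy)] at hn
    simpa [div_eq_inv_mul] using hn
  obtain ⟨k, ⟨hak, hka⟩, -⟩ := existsUnique_add_zsmul_mem_Ioc hstep x a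
  refine ⟨n, k, ?_, ?_⟩
  · simpa [dyadicPoint, zsmul_eq_mul, mul_div_assoc] using hak
  · have : dyadicPoint x y n k = x + k • ((y - x) / 2 ^ n) := by
      simp [dyadicPoint, zsmul_eq_mul, mul_div_assoc]
    linarith

theorem dyadicInterval_subset_Ioo (hxy : x < y) {n : ℕ} {k : ℤ} (hk₀ : 0 ≤ k)
    (hkn : k < 2 ^ n) : dyadicInterval x y n k ⊆ Ioo x y := by
  have hf := (dyadicPoint_strictMono hxy n).monotone
  simpa [dyadicInterval] using Ioo_subset_Ioo (hf hk₀) (hf (show k + 1 ≤ 2 ^ n by omega))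

theorem noncrossing_dyadicInterval (hxy : x < y) (n m : ℕ) (k j : ℤ) :
    Noncrossing (dyadicInterval x y n k) (dyadicInterval x y m j) := by
  wlog hnm : n ≤ m generalizing n m k j
  · exact (this m n j k (by omega)).symm
  obtain ⟨t, rfl⟩ := Nat.exists_eq_add_of_le hnm
  rw [dyadicInterval, ← dyadicPoint_add_mul_two_pow x y n t k,
    ← dyadicPoint_add_mul_two_pow x y n t (k + 1)]
  exact noncrossing_Ioo_of_strictMono (dyadicPoint_strictMono hxy _) _ _ j

theorem dyadicPoint_mem_Ioo_iff (hxy : x < y) {n : ℕ} {k : ℤ} :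
    dyadicPoint x y n k ∈ Ioo x y ↔ 0 < k ∧ k < 2 ^ n := by
  have hf := dyadicPoint_strictMono hxy n
  simpa using and_congr (hf.lt_iff_lt (a := 0) (b := k)) (hf.lt_iff_lt (a := k) (b := 2 ^ n))

theorem mem_dyadicIntervals_iff {S : Set ℝ} :
    S ∈ dyadicIntervals x y ↔ ∃ n, ∃ k : ℤ, 0 ≤ k ∧ k < 2 ^ n ∧ S = dyadicInterval x y n k := by
  constructor
  · rintro ⟨n, k, hk₁, hkn, rfl⟩
    refine ⟨n, k - 1, by omega, by exact_mod_cast (by omega : k - 1 < 2 ^ n), ?_⟩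
    simp [dyadicInterval, dyadicPoint]
  · rintro ⟨n, k, hk₀, hkn, rfl⟩
    lift k to ℕ using hk₀
    refine ⟨n, k + 1, by omega, by exact_mod_cast hkn, ?_⟩
    simp [dyadicInterval, dyadicPoint]

variable {a b : ℝ}

theorem Ioo_eq_dyadicInterval_of_noncrossing (hxy : x < y) {N : ℕ} {t : ℤ}
    (hmid : dyadicPoint x y (N + 1) (2 * t + 1) ∈ Ioo a b)
    (hcoarse : ∀ k, dyadicPoint x y N k ∉ Ioo a b)
    (hleft : Noncrossing (Ioo a b) (dyadicInterval x y (N + 1) (2 * t)))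
    (hright : Noncrossing (Ioo a b) (dyadicInterval x y (N + 1) (2 * t + 1))) :
    Ioo a b = dyadicInterval x y N t := by
  have hf := dyadicPoint_strictMono hxy (N + 1)
  have ha := hleft.le_of_right_mem_Ioo (hf (lt_add_one _)) hmid
  have hb := hright.le_of_left_mem_Ioo (hf (lt_add_one _)) hmid
  have hlt := hf (lt_add_one (2 * t))
  have hlt' := hf (lt_add_one (2 * t + 1))
  rw [show 2 * t + 1 + 1 = 2 * (t + 1) by ring, dyadicPoint_succ_two_mul] at hb hlt'
  rw [dyadicPoint_succ_two_mul] at ha hlt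
  have ha' : a = dyadicPoint x y N t :=
    ha.antisymm (not_lt.1 fun h => hcoarse t ⟨h, hlt.trans hmid.2⟩)
  have hb' : b = dyadicPoint x y N (t + 1) :=
    (not_lt.1 fun h => hcoarse (t + 1) ⟨hmid.1.trans hlt', h⟩).antisymm hb
  rw [ha', hb', dyadicInterval]

theorem exists_eq_dyadicInterval_of_noncrossing (hxy : x < y) (hxa : x ≤ a) (hab : a < b)
    (hby : b ≤ y)
    (H : ∀ n (k : ℤ), 0 ≤ k → k < 2 ^ n → Noncrossing (Ioo a b) (dyadicInterval x y n k)) :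
    ∃ n, ∃ k : ℤ, 0 ≤ k ∧ k < 2 ^ n ∧ Ioo a b = dyadicInterval x y n k := by
  classical
  have hex := exists_dyadicPoint_mem_Ioo hxy hab
  obtain ⟨m, hm⟩ := Nat.find_spec hex
  have hrange := (dyadicPoint_mem_Ioo_iff hxy).1 (Ioo_subset_Ioo hxa hby hm)
  obtain ⟨N, hN⟩ : ∃ N, Nat.find hex = N + 1 := by
    refine Nat.exists_eq_succ_of_ne_zero fun h => ?_
    rw [h] at hrange
    omega
  have hcoarse : ∀ k, dyadicPoint x y N k ∉ Ioo a b :=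
    fun k hk => Nat.find_min hex (by omega : N < Nat.find hex) ⟨k, hk⟩
  rw [hN] at hm hrange
  obtain ⟨t, rfl | rfl⟩ := Int.even_or_odd' m
  · exact absurd (dyadicPoint_succ_two_mul x y N t ▸ hm) (hcoarse t)
  have h2 : (2 : ℤ) ^ (N + 1) = 2 * 2 ^ N := pow_succ' 2 N
  refine ⟨N, t, by omega, by omega, Ioo_eq_dyadicInterval_of_noncrossing hxy hm hcoarse
    (H _ _ (by omega) (by omega)) (H _ _ (by omega) (by omega))⟩

end Dyadic

/-- The family of dyadic open subintervals of `I = (x,y)` (cutting `I` into `2ⁿ` equal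
pieces for each `n`) is pairwise noncrossing (any two members are disjoint or nested),
and it is maximal: any open subinterval of `(x,y)` noncrossing with all members already
belongs to the family. -/
theorem stmt10 (x y : ℝ) (hxy : x < y) :
    (∀ S ∈ {S : Set ℝ | ∃ n k : ℕ, 1 ≤ k ∧ k ≤ 2 ^ n ∧
        S = Set.Ioo (x + ((k : ℝ) - 1) * (y - x) / 2 ^ n) (x + (k : ℝ) * (y - x) / 2 ^ n)},
      S ⊆ Set.Ioo x y) ∧
    (∀ S ∈ {S : Set ℝ | ∃ n k : ℕ, 1 ≤ k ∧ k ≤ 2 ^ n ∧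
        S = Set.Ioo (x + ((k : ℝ) - 1) * (y - x) / 2 ^ n) (x + (k : ℝ) * (y - x) / 2 ^ n)},
      ∀ T ∈ {S : Set ℝ | ∃ n k : ℕ, 1 ≤ k ∧ k ≤ 2 ^ n ∧
        S = Set.Ioo (x + ((k : ℝ) - 1) * (y - x) / 2 ^ n) (x + (k : ℝ) * (y - x) / 2 ^ n)},
      Disjoint S T ∨ S ⊆ T ∨ T ⊆ S) ∧
    (∀ a b : ℝ, x ≤ a → a < b → b ≤ y →
      (∀ S ∈ {S : Set ℝ | ∃ n k : ℕ, 1 ≤ k ∧ k ≤ 2 ^ n ∧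
          S = Set.Ioo (x + ((k : ℝ) - 1) * (y - x) / 2 ^ n) (x + (k : ℝ) * (y - x) / 2 ^ n)},
        Disjoint (Set.Ioo a b) S ∨ Set.Ioo a b ⊆ S ∨ S ⊆ Set.Ioo a b) →
      Set.Ioo a b ∈ {S : Set ℝ | ∃ n k : ℕ, 1 ≤ k ∧ k ≤ 2 ^ n ∧
        S = Set.Ioo (x + ((k : ℝ) - 1) * (y - x) / 2 ^ n) (x + (k : ℝ) * (y - x) / 2 ^ n)}) := by
  change (∀ S ∈ dyadicIntervals x y, S ⊆ Ioo x y) ∧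
    (∀ S ∈ dyadicIntervals x y, ∀ T ∈ dyadicIntervals x y, Noncrossing S T) ∧
    (∀ a b : ℝ, x ≤ a → a < b → b ≤ y →
      (∀ S ∈ dyadicIntervals x y, Noncrossing (Ioo a b) S) → Ioo a b ∈ dyadicIntervals x y)
  simp only [mem_dyadicIntervals_iff]
  refine ⟨?_, ?_, ?_⟩
  · rintro S ⟨n, k, hk₀, hkn, rfl⟩
    exact dyadicInterval_subset_Ioo hxy hk₀ hkn
  · rintro S ⟨n, k, -, -, rfl⟩ T ⟨m, j, -, -, rfl⟩
    exact noncrossing_dyadicInterval hxy n m k j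
  · intro a b hxa hab hby H
    exact exists_eq_dyadicInterval_of_noncrossing hxy hxa hab hby
      fun n k hk₀ hkn => H _ ⟨n, k, hk₀, hkn, rfl⟩
end

section
/- Let L be a family of open subintervals of I = (x,y) ⊂ ℝ which is pairwise noncrossing (disjoint or nested), maximal with this property among subintervals of I, contains I itself, and is discrete in the sense that for every δ > 0 only finitely many members of L have length ≥ δ. Then there is a unique z with x < z < y such that every member of L other than I is contained in (x,z) or in (z,y), and L ∖ {I} is the disjoint union of a maximal noncrossing discrete family on (x,z) and one on (z,y). -/
/-- Two open intervals (given by their endpoint pairs) are noncrossing if they are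
disjoint or one contains the other. -/
def Noncross (p q : ℝ × ℝ) : Prop :=
  Disjoint (Set.Ioo p.1 p.2) (Set.Ioo q.1 q.2) ∨
  Set.Ioo p.1 p.2 ⊆ Set.Ioo q.1 q.2 ∨ Set.Ioo q.1 q.2 ⊆ Set.Ioo p.1 p.2

/-- `Fam x y L`: `L` is a family of open subintervals of `(x,y)` (encoded by endpoint
pairs), pairwise noncrossing, maximal with this property among subintervals of `(x,y)`,
and discrete (only finitely many members of length `≥ δ` for every `δ > 0`). -/
def Fam (x y : ℝ) (L : Set (ℝ × ℝ)) : Prop :=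
  (∀ p ∈ L, x ≤ p.1 ∧ p.1 < p.2 ∧ p.2 ≤ y) ∧
  (∀ p ∈ L, ∀ q ∈ L, Noncross p q) ∧
  (∀ a b : ℝ, x ≤ a → a < b → b ≤ y → (∀ p ∈ L, Noncross (a, b) p) → (a, b) ∈ L) ∧
  (∀ δ > (0 : ℝ), {p : ℝ × ℝ | p ∈ L ∧ δ ≤ p.2 - p.1}.Finite)

/-!
Among the members of `L` other than `I = (x, y)`, discreteness lets every member grow to a
maximal one. If a maximal proper member `c` stops short of `y`, the gap `(c.2, y)` crosses no
member, so by maximality of `L` it is a member and lies in a maximal proper member reaching `y`.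
Such a member is `(z, y)` with `x < z`, and then the gap `(x, z)` is a member as well. Every
proper member is disjoint from or inside `(z, y)`, hence lies in `(x, z)` or `(z, y)`; and
`z` is unique because both `(x, z)` and `(z, y)` have to lie on one side of any other split point.
-/

open Set Function

theorem noncross_of_le {p q : ℝ × ℝ}
    (h : p.2 ≤ q.1 ∨ q.2 ≤ p.1 ∨ (q.1 ≤ p.1 ∧ p.2 ≤ q.2) ∨ (p.1 ≤ q.1 ∧ q.2 ≤ p.2)) :
    Noncross p q := by
  rcases h with h | h | h | h
  · exact Or.inl (Ioo_disjoint_Ioo.2 (min_le_of_left_le (h.trans (le_max_right _ _))))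
  · exact Or.inl (Ioo_disjoint_Ioo.2 (min_le_of_right_le (h.trans (le_max_left _ _))))
  · exact Or.inr (Or.inl (Ioo_subset_Ioo h.1 h.2))
  · exact Or.inr (Or.inr (Ioo_subset_Ioo h.1 h.2))

theorem noncross_iff {p q : ℝ × ℝ} (hp : p.1 < p.2) (hq : q.1 < q.2) :
    Noncross p q ↔
      p.2 ≤ q.1 ∨ q.2 ≤ p.1 ∨ (q.1 ≤ p.1 ∧ p.2 ≤ q.2) ∨ (p.1 ≤ q.1 ∧ q.2 ≤ p.2) := by
  refine ⟨fun h => ?_, noncross_of_le⟩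
  rcases h with h | h | h
  · rcases min_le_iff.1 (Ioo_disjoint_Ioo.1 h) with h | h <;>
      rcases le_max_iff.1 h with h | h
    exacts [absurd h hp.not_ge, Or.inl h, Or.inr (Or.inl h), absurd h hq.not_ge]
  · exact Or.inr (Or.inr (Or.inl ((Ioo_subset_Ioo_iff hp).1 h)))
  · exact Or.inr (Or.inr (Or.inr ((Ioo_subset_Ioo_iff hq).1 h)))

theorem eq_of_Ioo_split {x y z z' : ℝ} (hxz : x < z) (hzy : z < y) (hxz' : x < z')
    (hz'y : z' < y) (hl : Ioo x z ⊆ Ioo x z' ∨ Ioo x z ⊆ Ioo z' y)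
    (hr : Ioo z y ⊆ Ioo x z' ∨ Ioo z y ⊆ Ioo z' y) : z = z' := by
  rw [Ioo_subset_Ioo_iff hxz, Ioo_subset_Ioo_iff hxz] at hl
  rw [Ioo_subset_Ioo_iff hzy, Ioo_subset_Ioo_iff hzy] at hr
  rcases hl with ⟨-, hl⟩ | ⟨hl, -⟩ <;> rcases hr with ⟨-, hr⟩ | ⟨hr, -⟩ <;> linarith

namespace Fam

variable {x y : ℝ} {L : Set (ℝ × ℝ)}

theorem restrict (hL : Fam x y L) {a b : ℝ} (hxa : x ≤ a) (hby : b ≤ y)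
    (h : ∀ p ∈ L, Noncross (a, b) p) :
    Fam a b {p ∈ L | Ioo p.1 p.2 ⊆ Ioo a b} := by
  obtain ⟨hbd, hnc, hmax, hfin⟩ := hL
  refine ⟨fun p hp => ?_, fun p hp q hq => hnc p hp.1 q hq.1, fun c d hac hcd hdb h' => ?_,
    fun δ hδ => (hfin δ hδ).subset fun p hp => ⟨hp.1.1, hp.2⟩⟩
  · have hp12 := (hbd p hp.1).2.1
    have := (Ioo_subset_Ioo_iff hp12).1 hp.2
    exact ⟨this.1, hp12, this.2⟩
  · have hsub : Ioo c d ⊆ Ioo a b := Ioo_subset_Ioo hac hdb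
    refine ⟨hmax c d (hxa.trans hac) hcd (hdb.trans hby) fun p hp => ?_, hsub⟩
    rcases h p hp with hdisj | habp | hpab
    · exact Or.inl (hdisj.mono_left hsub)
    · exact Or.inr (Or.inl (hsub.trans habp))
    · exact h' p ⟨hp, hpab⟩

theorem exists_ne (hL : Fam x y L) (hxy : x < y) : ∃ p ∈ L, p ≠ (x, y) := by
  by_contra! h
  have hmid : (x, (x + y) / 2) ∈ L := by
    refine hL.2.2.1 _ _ le_rfl (by linarith) (by linarith) fun r hr => ?_
    rw [h r hr]
    exact noncross_of_le (Or.inr (Or.inr (Or.inl ⟨le_rfl, by linarith⟩)))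
  exact (by linarith : (x + y) / 2 ≠ y) (congrArg Prod.snd (h _ hmid))

theorem exists_le_maximalFor (hL : Fam x y L) {S : Set (ℝ × ℝ)} (hS : S ⊆ L) {p : ℝ × ℝ}
    (hp : p ∈ S) :
    ∃ c, Ioo p.1 p.2 ⊆ Ioo c.1 c.2 ∧ MaximalFor (· ∈ S) (uncurry Ioo) c := by
  have hp12 := (hL.1 p (hS hp)).2.1
  set T := {r ∈ S | Ioo p.1 p.2 ⊆ Ioo r.1 r.2}
  have hT : T.Finite := by
    refine (hL.2.2.2 (p.2 - p.1) (sub_pos.2 hp12)).subset fun r hr => ⟨hS hr.1, ?_⟩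
    have := (Ioo_subset_Ioo_iff hp12).1 hr.2
    linarith
  obtain ⟨c, ⟨hcS, hpc⟩, hcmax⟩ :=
    hT.exists_maximalFor (uncurry Ioo) T ⟨p, hp, subset_rfl⟩
  exact ⟨c, hpc, hcS, fun r hr hcr => hcmax ⟨hr, hpc.trans hcr⟩ hcr⟩

theorem disjoint_or_subset_of_maximalFor (hL : Fam x y L) {c r : ℝ × ℝ}
    (hc : MaximalFor (· ∈ L \ {(x, y)}) (uncurry Ioo) c) (hr : r ∈ L \ {(x, y)}) :
    r.2 ≤ c.1 ∨ c.2 ≤ r.1 ∨ (c.1 ≤ r.1 ∧ r.2 ≤ c.2) := by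
  have hr12 := (hL.1 r hr.1).2.1
  rcases (noncross_iff hr12 (hL.1 c hc.1.1).2.1).1 (hL.2.1 r hr.1 c hc.1.1) with h | h | h | h
  · exact Or.inl h
  · exact Or.inr (Or.inl h)
  · exact Or.inr (Or.inr h)
  · exact Or.inr (Or.inr ((Ioo_subset_Ioo_iff hr12).1 (hc.2 hr (Ioo_subset_Ioo h.1 h.2))))

theorem noncross_left_of_maximalFor (hL : Fam x y L) {c : ℝ × ℝ}
    (hc : MaximalFor (· ∈ L \ {(x, y)}) (uncurry Ioo) c) {r : ℝ × ℝ} (hr : r ∈ L) :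
    Noncross (x, c.1) r := by
  obtain ⟨-, hc12, hcy⟩ := hL.1 c hc.1.1
  by_cases hrI : r = (x, y)
  · subst hrI
    exact noncross_of_le (Or.inr (Or.inr (Or.inl ⟨le_rfl, hc12.le.trans hcy⟩)))
  rcases hL.disjoint_or_subset_of_maximalFor hc ⟨hr, hrI⟩ with h | h | h
  · exact noncross_of_le (Or.inr (Or.inr (Or.inr ⟨(hL.1 r hr).1, h⟩)))
  · exact noncross_of_le (Or.inl (hc12.le.trans h))
  · exact noncross_of_le (Or.inl h.1)

theorem noncross_right_of_maximalFor (hL : Fam x y L) {c : ℝ × ℝ}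
    (hc : MaximalFor (· ∈ L \ {(x, y)}) (uncurry Ioo) c) {r : ℝ × ℝ} (hr : r ∈ L) :
    Noncross (c.2, y) r := by
  obtain ⟨hxc, hc12, -⟩ := hL.1 c hc.1.1
  by_cases hrI : r = (x, y)
  · subst hrI
    exact noncross_of_le (Or.inr (Or.inr (Or.inl ⟨hxc.trans hc12.le, le_rfl⟩)))
  rcases hL.disjoint_or_subset_of_maximalFor hc ⟨hr, hrI⟩ with h | h | h
  · exact noncross_of_le (Or.inr (Or.inl (h.trans hc12.le)))
  · exact noncross_of_le (Or.inr (Or.inr (Or.inr ⟨h, (hL.1 r hr).2.2⟩)))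
  · exact noncross_of_le (Or.inr (Or.inl h.2))

theorem exists_maximalFor_right (hL : Fam x y L) (hxy : x < y) :
    ∃ z, x < z ∧ MaximalFor (· ∈ L \ {(x, y)}) (uncurry Ioo) (z, y) := by
  suffices ∃ c, MaximalFor (· ∈ L \ {(x, y)}) (uncurry Ioo) c ∧ y ≤ c.2 by
    obtain ⟨⟨z, w⟩, hc, hyw⟩ := this
    obtain ⟨hxz, -, hwy⟩ := hL.1 _ hc.1.1
    obtain rfl : w = y := hwy.antisymm hyw
    exact ⟨z, hxz.lt_of_ne fun h => hc.1.2 (by rw [h]; rfl), hc⟩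
  obtain ⟨p, hp, hpI⟩ := hL.exists_ne hxy
  obtain ⟨c, -, hc⟩ := hL.exists_le_maximalFor (S := L \ {(x, y)}) sdiff_subset ⟨hp, hpI⟩
  obtain ⟨hxc, hc12, hcy⟩ := hL.1 c hc.1.1
  rcases hcy.lt_or_eq with hcy | hcy
  · have hgapL : (c.2, y) ∈ L := hL.2.2.1 _ _ (hxc.trans hc12.le) hcy le_rfl
      fun _ hr => hL.noncross_right_of_maximalFor hc hr
    have hgap : (c.2, y) ∈ L \ {(x, y)} :=
      ⟨hgapL, fun h => (hxc.trans_lt hc12).ne' (congrArg Prod.fst h)⟩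
    obtain ⟨c', hgapc', hc'⟩ := hL.exists_le_maximalFor sdiff_subset hgap
    exact ⟨c', hc', ((Ioo_subset_Ioo_iff hcy).1 hgapc').2⟩
  · exact ⟨c, hc, hcy.ge⟩

theorem subset_or_subset_of_maximalFor (hL : Fam x y L) {z : ℝ}
    (hc : MaximalFor (· ∈ L \ {(x, y)}) (uncurry Ioo) (z, y)) {p : ℝ × ℝ} (hp : p ∈ L)
    (hpI : p ≠ (x, y)) :
    Ioo p.1 p.2 ⊆ Ioo x z ∨ Ioo p.1 p.2 ⊆ Ioo z y := by
  obtain ⟨hxp, -, hpy⟩ := hL.1 p hp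
  rcases hL.disjoint_or_subset_of_maximalFor hc ⟨hp, hpI⟩ with h | h | h
  · exact Or.inl (Ioo_subset_Ioo hxp h)
  · exact Or.inr (Ioo_subset_Ioo ((hL.1 _ hc.1.1).2.1.le.trans h) hpy)
  · exact Or.inr (Ioo_subset_Ioo h.1 h.2)

end Fam

theorem stmt11_general (x y : ℝ) (hxy : x < y) (L : Set (ℝ × ℝ))
    (hL : Fam x y L) :
    ∃! z : ℝ, x < z ∧ z < y ∧
      Fam x z {p ∈ L | Set.Ioo p.1 p.2 ⊆ Set.Ioo x z} ∧
      Fam z y {p ∈ L | Set.Ioo p.1 p.2 ⊆ Set.Ioo z y} ∧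
      ∀ p ∈ L, p ≠ (x, y) →
        Set.Ioo p.1 p.2 ⊆ Set.Ioo x z ∨ Set.Ioo p.1 p.2 ⊆ Set.Ioo z y := by
  obtain ⟨z, hxz, hc⟩ := hL.exists_maximalFor_right hxy
  have hzy : z < y := (hL.1 _ hc.1.1).2.1
  have hleft : ∀ p ∈ L, Noncross (x, z) p := fun p hp => hL.noncross_left_of_maximalFor hc hp
  have hright : ∀ p ∈ L, Noncross (z, y) p := fun p hp => hL.2.1 _ hc.1.1 p hp
  have hsplit : ∀ p ∈ L, p ≠ (x, y) → Ioo p.1 p.2 ⊆ Ioo x z ∨ Ioo p.1 p.2 ⊆ Ioo z y :=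
    fun p hp hpI => hL.subset_or_subset_of_maximalFor hc hp hpI
  refine ⟨z, ⟨hxz, hzy, hL.restrict le_rfl hzy.le hleft, hL.restrict hxz.le le_rfl hright,
    hsplit⟩, ?_⟩
  rintro z' ⟨hxz', hz'y, -, -, hsplit'⟩
  have hxzL : (x, z) ∈ L := hL.2.2.1 x z le_rfl hxz hzy.le hleft
  refine (eq_of_Ioo_split hxz hzy hxz' hz'y ?_ ?_).symm
  · exact hsplit' _ hxzL fun h => hzy.ne (congrArg Prod.snd h)
  · exact hsplit' _ hc.1.1 fun h => hxz.ne' (congrArg Prod.fst h)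

/-- A discrete maximal noncrossing family `L` on `I = (x,y)` containing `I` splits at a
unique point `z ∈ (x,y)`: every member other than `I` lies in `(x,z)` or `(z,y)`, and
`L ∖ {I}` is the disjoint union of a discrete maximal noncrossing family on `(x,z)` and
one on `(z,y)`. -/
theorem stmt11 (x y : ℝ) (hxy : x < y) (L : Set (ℝ × ℝ))
    (hL : Fam x y L) (hI : (x, y) ∈ L) :
    ∃! z : ℝ, x < z ∧ z < y ∧
      Fam x z {p ∈ L | Set.Ioo p.1 p.2 ⊆ Set.Ioo x z} ∧
      Fam z y {p ∈ L | Set.Ioo p.1 p.2 ⊆ Set.Ioo z y} ∧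
      ∀ p ∈ L, p ≠ (x, y) →
        Set.Ioo p.1 p.2 ⊆ Set.Ioo x z ∨ Set.Ioo p.1 p.2 ⊆ Set.Ioo z y :=
  stmt11_general x y hxy L hL
end

section
/- Let L be a discrete maximal noncrossing family of open subintervals of I = (x,y) (containing I), with an element X₁ ≠ I of maximal length among members of L other than I. Then X₁ = (x,z) or X₁ = (z,y) for some x < z < y. -/
theorem interleave_of_not_noncross {p q : ℝ × ℝ} (hle : p.1 ≤ q.1) (h : ¬ Noncross p q) :
    p.1 < q.1 ∧ q.1 < p.2 ∧ p.2 < q.2 := by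
  simp only [Noncross, not_or, Set.not_disjoint_iff, Set.mem_Ioo] at h
  obtain ⟨⟨t, ⟨hpt, htp⟩, hqt, htq⟩, hpq, hqp⟩ := h
  have hq₂ : p.2 < q.2 := by
    by_contra! h
    exact hqp (Set.Ioo_subset_Ioo hle h)
  have hq₁ : p.1 < q.1 := by
    by_contra! h
    exact hpq (Set.Ioo_subset_Ioo h hq₂.le)
  exact ⟨hq₁, by linarith, hq₂⟩

theorem Noncross.snd_le_fst_of_mem_Ioo {p q : ℝ × ℝ} (h : Noncross p q) (hp : p.1 < p.2)
    (hq : p.2 ∈ Set.Ioo q.1 q.2) : q.1 ≤ p.1 := by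
  obtain ⟨hq₁, hq₂⟩ := hq
  rcases h with hd | hpq | hqp
  · rw [Set.Ioo_disjoint_Ioo] at hd
    simp only [min_le_iff, le_max_iff] at hd
    rcases hd with h | h <;> rcases h with h | h <;> linarith
  · exact ((Set.Ioo_subset_Ioo_iff hp).1 hpq).1
  · linarith [((Set.Ioo_subset_Ioo_iff (hq₁.trans hq₂)).1 hqp).2]

/- If `(a,b)` touches neither end of `(x,y)`, either `(x,b)` can be added to `L` by maximality,
or some member crosses `(x,b)`; such a member starts after `x` and straddles `b`, so it must
contain `(a,b)` and is strictly longer. -/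
theorem Fam.exists_longer_of_interior {x y a b : ℝ} {L : Set (ℝ × ℝ)} (hL : Fam x y L)
    (hmem : (a, b) ∈ L) (hxa : x < a) (hby : b < y) :
    ∃ p ∈ L, p ≠ (x, y) ∧ b - a < p.2 - p.1 := by
  obtain ⟨hbound, hpair, hmaximal, -⟩ := hL
  have hab := (hbound _ hmem).2.1
  by_cases hnc : ∀ p ∈ L, Noncross (x, b) p
  · refine ⟨(x, b), hmaximal x b le_rfl (hxa.trans hab) hby.le hnc, ?_, by simpa using hxa⟩
    simp [hby.ne]
  push Not at hnc
  obtain ⟨p, hpL, hcross⟩ := hnc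
  obtain ⟨hxp, hpb, hbp⟩ := interleave_of_not_noncross (hbound p hpL).1 hcross
  have hpa : p.1 ≤ a := (hpair _ hmem _ hpL).snd_le_fst_of_mem_Ioo hab ⟨hpb, hbp⟩
  exact ⟨p, hpL, fun h => by simp [h] at hxp, by linarith⟩

theorem stmt12_general (x y : ℝ) (L : Set (ℝ × ℝ)) (hL : Fam x y L)
    (a b : ℝ) (hmem : (a, b) ∈ L) (hne : (a, b) ≠ (x, y))
    (hmax : ∀ p ∈ L, p ≠ (x, y) → p.2 - p.1 ≤ b - a) :
    (a = x ∧ x < b ∧ b < y) ∨ (b = y ∧ x < a ∧ a < y) := by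
  obtain ⟨hxa, hab, hby⟩ : x ≤ a ∧ a < b ∧ b ≤ y := hL.1 _ hmem
  rcases hxa.eq_or_lt with rfl | hxa
  · exact .inl ⟨rfl, hab, hby.lt_of_ne (by rintro rfl; exact hne rfl)⟩
  rcases hby.lt_or_eq with hby | rfl
  · obtain ⟨p, hpL, hpne, hlonger⟩ := hL.exists_longer_of_interior hmem hxa hby
    exact absurd (hmax p hpL hpne) (not_le.2 hlonger)
  · exact .inr ⟨rfl, hxa, hab⟩

/-- In a discrete maximal noncrossing family on `(x,y)` containing `(x,y)`, an element
`X₁ = (a,b) ≠ (x,y)` of maximal length among the members other than `(x,y)` must be of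
the form `(x,z)` or `(z,y)` for some `x < z < y`. -/
theorem stmt12 (x y : ℝ) (L : Set (ℝ × ℝ)) (hL : Fam x y L) (hI : (x, y) ∈ L)
    (a b : ℝ) (hmem : (a, b) ∈ L) (hne : (a, b) ≠ (x, y))
    (hmax : ∀ p ∈ L, p ≠ (x, y) → p.2 - p.1 ≤ b - a) :
    (a = x ∧ x < b ∧ b < y) ∨ (b = y ∧ x < a ∧ a < y) :=
  stmt12_general x y L hL a b hmem hne hmax
end
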